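/- Let G : [m1, m2] → ℝ be nonnegative, convex, and integrable with 0 ≤ m1 < m2, and let λ > 0. Then G((m1+m2)/2) ≤ (Γ(λ+1)/(2(m2-m1)^λ))·[J_{m1+}^λ G(m2) + J_{m2-}^λ G(m1)] ≤ (G(m1)+G(m2))/2, where J_{m1+}^λ G(x) = (1/Γ(λ)) ∫_{m1}^x (x-γ)^{λ-1} G(γ) dγ and J_{m2-}^λ G(x) = (1/Γ(λ)) ∫_x^{m2} (γ-x)^{λ-1} G(γ) dγ. -/

import Mathlib

/-!
Both fractional integrals integrate `G` against `w x = (m2 - x) ^ (λ - 1)` and its reflection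
`x ↦ w (m1 + m2 - x)`; reflecting the second one turns their sum into
`∫ w x * (G x + G (m1 + m2 - x))`. Convexity gives
`2 G ((m1 + m2) / 2) ≤ G x + G (m1 + m2 - x) ≤ G m1 + G m2` pointwise, and since
`∫ w = (m2 - m1) ^ λ / λ` and `Γ (λ + 1) = λ Γ (λ)`, the prefactor is exactly
`1 / (2 ∫ w)`.
-/

open MeasureTheory intervalIntegral Real

open Set

section
variable {a b : ℝ} {f w : ℝ → ℝ}

lemma add_sub_mem_Icc {x : ℝ} (hx : x ∈ Icc a b) : a + b - x ∈ Icc a b :=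
  ⟨by linarith [hx.2], by linarith [hx.1]⟩

lemma ConvexOn.add_comp_reflect_le (hf : ConvexOn ℝ (Icc a b) f) {x : ℝ} (hx : x ∈ Icc a b) :
    f x + f (a + b - x) ≤ f a + f b := by
  rcases (hx.1.trans hx.2).eq_or_lt with rfl | hab
  · obtain rfl : x = a := le_antisymm hx.2 hx.1
    simp
  have chord : ∀ y ∈ Icc a b, f y ≤ (b - y) / (b - a) * f a + (y - a) / (b - a) * f b := by
    intro y hy
    have h := hf.2 (left_mem_Icc.2 hab.le) (right_mem_Icc.2 hab.le)
      (div_nonneg (sub_nonneg.2 hy.2) (sub_nonneg.2 hab.le))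
      (div_nonneg (sub_nonneg.2 hy.1) (sub_nonneg.2 hab.le)) (by field_simp; ring)
    simp only [smul_eq_mul] at h
    have hy_eq : (b - y) / (b - a) * a + (y - a) / (b - a) * b = y := by field_simp; ring
    rwa [hy_eq] at h
  have h₁ := chord x hx
  have h₂ := chord _ (add_sub_mem_Icc hx)
  have hsum : (b - x) / (b - a) + (x - a) / (b - a) = 1 := by field_simp; ring
  have e₁ : (b - (a + b - x)) / (b - a) = (x - a) / (b - a) := by ring
  have e₂ : (a + b - x - a) / (b - a) = (b - x) / (b - a) := by ring
  rw [e₁, e₂] at h₂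
  linear_combination h₁ + h₂ + (f a + f b) * hsum

lemma ConvexOn.two_mul_midpoint_le (hf : ConvexOn ℝ (Icc a b) f) {x : ℝ} (hx : x ∈ Icc a b) :
    2 * f ((a + b) / 2) ≤ f x + f (a + b - x) := by
  have h := hf.2 hx (add_sub_mem_Icc hx) (by norm_num : (0 : ℝ) ≤ 1 / 2)
    (by norm_num : (0 : ℝ) ≤ 1 / 2) (by norm_num)
  simp only [smul_eq_mul] at h
  have e : 1 / 2 * x + 1 / 2 * (a + b - x) = (a + b) / 2 := by ring
  rw [e] at h
  linarith

lemma ConvexOn.exists_abs_le (hf : ConvexOn ℝ (Icc a b) f) :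
    ∃ C, ∀ x ∈ Icc a b, |f x| ≤ C := by
  have le_max_ends : ∀ x ∈ Icc a b, f x ≤ max (f a) (f b) := fun x hx =>
    hf.le_max_of_mem_Icc (left_mem_Icc.2 (hx.1.trans hx.2)) (right_mem_Icc.2 (hx.1.trans hx.2)) hx
  refine ⟨max |2 * f ((a + b) / 2) - max (f a) (f b)| |max (f a) (f b)|,
    fun x hx => abs_le_max_abs_abs ?_ (le_max_ends x hx)⟩
  linarith [hf.two_mul_midpoint_le hx, le_max_ends _ (add_sub_mem_Icc hx)]

lemma IntervalIntegrable.mul_of_abs_le {C : ℝ} {g : ℝ → ℝ} (hab : a ≤ b)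
    (hw : IntervalIntegrable w volume a b) (hg : IntervalIntegrable g volume a b)
    (hC : ∀ x ∈ Icc a b, |g x| ≤ C) :
    IntervalIntegrable (fun x => w x * g x) volume a b := by
  rw [intervalIntegrable_iff_integrableOn_Ioc_of_le hab] at hw hg ⊢
  simp_rw [mul_comm (w _)]
  exact hw.bdd_mul hg.aestronglyMeasurable
    (ae_restrict_of_forall_mem measurableSet_Ioc fun x hx => hC x (Ioc_subset_Icc_self hx))

lemma intervalIntegral.integral_comp_add_sub (a b : ℝ) (g : ℝ → ℝ) :
    ∫ x in a..b, g (a + b - x) = ∫ x in a..b, g x := by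
  simp [integral_comp_sub_left g (a + b)]

lemma intervalIntegrable_const_sub_rpow {r : ℝ} (c : ℝ) (hr : -1 < r) :
    IntervalIntegrable (fun x => (c - x) ^ r) volume a b := by
  simpa using (intervalIntegrable_rpow' hr (a := c - a) (b := c - b)).comp_sub_left c

lemma integral_sub_rpow_sub_one (a b : ℝ) {l : ℝ} (hl : 0 < l) :
    ∫ x in a..b, (b - x) ^ (l - 1) = (b - a) ^ l / l := by
  rw [integral_comp_sub_left (fun x => x ^ (l - 1)), sub_self,
    integral_rpow (Or.inl (by linarith)), zero_rpow (by linarith)]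
  simp

lemma integral_mul_add_integral_comp_add_sub_mul
    (hwf : IntervalIntegrable (fun x => w x * f x) volume a b)
    (hwf' : IntervalIntegrable (fun x => w x * f (a + b - x)) volume a b) :
    (∫ x in a..b, w x * f x) + ∫ x in a..b, w (a + b - x) * f x =
      ∫ x in a..b, w x * (f x + f (a + b - x)) := by
  rw [← integral_comp_add_sub a b (fun x => w (a + b - x) * f x)]
  simp only [sub_sub_cancel, mul_add]
  exact (integral_add hwf hwf').symm

/-- Fejér's inequality for the symmetric weight `x ↦ w x + w (a + b - x)`. -/
theorem ConvexOn.fejer_symmetrized (hab : a ≤ b) (hf : ConvexOn ℝ (Icc a b) f)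
    (hfi : IntervalIntegrable f volume a b) (hw : IntervalIntegrable w volume a b)
    (hw0 : ∀ x ∈ Icc a b, 0 ≤ w x) :
    2 * f ((a + b) / 2) * ∫ x in a..b, w x ≤
        (∫ x in a..b, w x * f x) + ∫ x in a..b, w (a + b - x) * f x ∧
      (∫ x in a..b, w x * f x) + ∫ x in a..b, w (a + b - x) * f x ≤
        (f a + f b) * ∫ x in a..b, w x := by
  obtain ⟨C, hC⟩ := hf.exists_abs_le
  have hwf := hw.mul_of_abs_le hab hfi hC
  have hwf' : IntervalIntegrable (fun x => w x * f (a + b - x)) volume a b :=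
    hw.mul_of_abs_le hab (by simpa using (hfi.comp_sub_left (a + b)).symm)
      fun x hx => hC _ (add_sub_mem_Icc hx)
  have hsum : IntervalIntegrable (fun x => w x * (f x + f (a + b - x))) volume a b := by
    simpa only [mul_add] using hwf.add hwf'
  rw [integral_mul_add_integral_comp_add_sub_mul hwf hwf', mul_comm _ (∫ x in a..b, w x),
    mul_comm _ (∫ x in a..b, w x), ← intervalIntegral.integral_mul_const,
    ← intervalIntegral.integral_mul_const]
  constructor
  · refine integral_mono_on hab (hw.mul_const _) hsum fun x hx => ?_
    exact mul_le_mul_of_nonneg_left (hf.two_mul_midpoint_le hx) (hw0 x hx)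
  · refine integral_mono_on hab hsum (hw.mul_const _) fun x hx => ?_
    exact mul_le_mul_of_nonneg_left (hf.add_comp_reflect_le hx) (hw0 x hx)

end

theorem sarikaya_fractional_hh_general (m1 m2 : ℝ) (G : ℝ → ℝ) (hlt : m1 < m2)
    (hconv : ConvexOn ℝ (Set.Icc m1 m2) G)
    (hint : IntervalIntegrable G volume m1 m2)
    (l : ℝ) (hl : 0 < l) :
    G ((m1 + m2) / 2) ≤ (Real.Gamma (l + 1) / (2 * (m2 - m1) ^ l)) *
        ((1 / Real.Gamma l) * (∫ γ in m1..m2, (m2 - γ) ^ (l - 1) * G γ) +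
         (1 / Real.Gamma l) * (∫ γ in m1..m2, (γ - m1) ^ (l - 1) * G γ)) ∧
      (Real.Gamma (l + 1) / (2 * (m2 - m1) ^ l)) *
        ((1 / Real.Gamma l) * (∫ γ in m1..m2, (m2 - γ) ^ (l - 1) * G γ) +
         (1 / Real.Gamma l) * (∫ γ in m1..m2, (γ - m1) ^ (l - 1) * G γ)) ≤
      (G m1 + G m2) / 2 := by
  obtain ⟨lower, upper⟩ :=
    hconv.fejer_symmetrized (w := fun x => (m2 - x) ^ (l - 1)) hlt.le hint
    (intervalIntegrable_const_sub_rpow m2 (by linarith))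
    fun x hx => rpow_nonneg (sub_nonneg.2 hx.2) _
  have reflect_weight : ∀ x, m2 - (m1 + m2 - x) = x - m1 := fun x => by ring
  simp only [reflect_weight, integral_sub_rpow_sub_one m1 m2 hl] at lower upper
  have hW : 0 < 2 * ((m2 - m1) ^ l / l) := by have := sub_pos.2 hlt; positivity
  have normalize : ∀ I₁ I₂ : ℝ, Gamma (l + 1) / (2 * (m2 - m1) ^ l) *
      (1 / Gamma l * I₁ + 1 / Gamma l * I₂) = (I₁ + I₂) / (2 * ((m2 - m1) ^ l / l)) := by
    intro I₁ I₂
    rw [Gamma_add_one hl.ne']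
    field_simp [(Gamma_pos_of_pos hl).ne']
  rw [normalize, le_div_iff₀ hW, div_le_iff₀ hW]
  constructor <;> linarith

theorem sarikaya_fractional_hh (m1 m2 : ℝ) (G : ℝ → ℝ) (hm1 : 0 ≤ m1) (hlt : m1 < m2)
    (hnonneg : ∀ x ∈ Set.Icc m1 m2, 0 ≤ G x)
    (hconv : ConvexOn ℝ (Set.Icc m1 m2) G)
    (hint : IntervalIntegrable G volume m1 m2)
    (l : ℝ) (hl : 0 < l) :
    G ((m1 + m2) / 2) ≤ (Real.Gamma (l + 1) / (2 * (m2 - m1) ^ l)) *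
        ((1 / Real.Gamma l) * (∫ γ in m1..m2, (m2 - γ) ^ (l - 1) * G γ) +
         (1 / Real.Gamma l) * (∫ γ in m1..m2, (γ - m1) ^ (l - 1) * G γ)) ∧
      (Real.Gamma (l + 1) / (2 * (m2 - m1) ^ l)) *
        ((1 / Real.Gamma l) * (∫ γ in m1..m2, (m2 - γ) ^ (l - 1) * G γ) +
         (1 / Real.Gamma l) * (∫ γ in m1..m2, (γ - m1) ^ (l - 1) * G γ)) ≤
      (G m1 + G m2) / 2 :=
  sarikaya_fractional_hh_general m1 m2 G hlt hconv hint l hl
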